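/- Suppose the noise values {L_h}_{h∈H} are independent real-valued random variables with E[L_h] = 0 and Var(L_h) = 8/ε_{ℓ(h)}², where ℓ(h) is the level of h and ε_1, …, ε_d > 0. Then for every district D ⊆ H_d with associated weights {w_h}, the district error satisfies E[E_D] = 0 and Var(E_D) = 8 w_root² / ε_1² + Σ_{ℓ=2}^{d} (8/ε_ℓ²) · Σ_{h ∈ H_ℓ} (w_h − w_{ĥ})². -/

import Mathlib

open Finset MeasureTheory ProbabilityTheory

structure Hierarchy where
  Node : Type
  fintypeNode : Fintype Node
  decEqNode : DecidableEq Node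
  d : ℕ
  d_pos : 1 ≤ d
  root : Node
  level : Node → ℕ
  parent : Node → Node
  level_pos : ∀ h, 1 ≤ level h
  level_le : ∀ h, level h ≤ d
  level_root : level root = 1
  root_unique : ∀ h, level h = 1 → h = root
  parent_level : ∀ h, h ≠ root → level (parent h) + 1 = level h
  child_exists : ∀ h, level h < d → ∃ c, c ≠ root ∧ parent c = h

attribute [instance] Hierarchy.fintypeNode Hierarchy.decEqNode

namespace Hierarchy

variable (H : Hierarchy)

def children (h : H.Node) : Finset H.Node :=
  Finset.univ.filter fun c => c ≠ H.root ∧ H.parent c = h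

def levelSet (ℓ : ℕ) : Finset H.Node :=
  Finset.univ.filter fun h => H.level h = ℓ

def leaves : Finset H.Node := H.levelSet H.d

def Consistent (a : H.Node → ℝ) : Prop :=
  ∀ h, H.level h < H.d → a h = ∑ c ∈ H.children h, a c

def IsToyDown (a L α : H.Node → ℝ) : Prop :=
  α H.root = a H.root + L H.root ∧
  ∀ h, H.level h < H.d →
    (∑ c ∈ H.children h, α c) = α h ∧
    ∀ x : H.Node → ℝ, (∑ c ∈ H.children h, x c) = α h →
      (∃ c ∈ H.children h, x c ≠ α c) →
      ∑ c ∈ H.children h, (α c - (a c + L c))^2 <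
        ∑ c ∈ H.children h, (x c - (a c + L c))^2

def IsWeights (D : Finset H.Node) (w : H.Node → ℝ) : Prop :=
  (∀ h, H.level h = H.d → w h = if h ∈ D then 1 else 0) ∧
  (∀ h, H.level h < H.d → w h = (∑ c ∈ H.children h, w c) / ((H.children h).card : ℝ))

def frag (w : H.Node → ℝ) : ℝ :=
  ∑ h ∈ Finset.univ.filter (fun h => h ≠ H.root), (w h - w (H.parent h))^2

end Hierarchy

/-!
Each ToyDown step hands the parent's error down to the children in equal shares, after removing
the children's own noise: `E_c = L_c + (E_h - ∑ L_{c'}) / n(h)`. Since `w_h` is the mean of the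
children's weights, weighting by `w` gives
`∑_c w_c E_c = w_h E_h + ∑_c (w_c - w_h) L_c`, so the weighted error of a level is that of the
level above plus an independent noise term. Telescoping from the root down to the leaves writes
`E_D` as the linear combination `∑_h (w_h - w_ĥ) L_h` (coefficient `w_root` at the root) of the
independent centred noises; its mean is `0` and its variance is the sum of the squared
coefficients times the variances.
-/

theorem Finset.sum_sq_sub_eq_of_sum_eq_add_card_mul {ι : Type*} (s : Finset ι)
    (x y : ι → ℝ) (t : ℝ) (hx : ∑ i ∈ s, x i = ∑ i ∈ s, y i + #s * t) :
    ∑ i ∈ s, (x i - y i) ^ 2 = ∑ i ∈ s, (x i - (y i + t)) ^ 2 + #s * t ^ 2 := by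
  have hzero : ∑ i ∈ s, (x i - (y i + t)) = 0 := by
    rw [sum_sub_distrib, sum_add_distrib, hx, sum_const, nsmul_eq_mul, sub_self]
  calc ∑ i ∈ s, (x i - y i) ^ 2
      = ∑ i ∈ s, ((x i - (y i + t)) ^ 2 + 2 * t * (x i - (y i + t)) + t ^ 2) :=
        sum_congr rfl fun i _ => by ring
    _ = ∑ i ∈ s, (x i - (y i + t)) ^ 2 + #s * t ^ 2 := by
        rw [sum_add_distrib, sum_add_distrib, ← mul_sum, hzero, mul_zero, add_zero, sum_const,
          nsmul_eq_mul]

theorem Finset.eq_add_of_forall_sum_sq_sub_lt {ι : Type*} {s : Finset ι} (hs : s.Nonempty)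
    {x y : ι → ℝ}
    (hmin : ∀ z : ι → ℝ, ∑ i ∈ s, z i = ∑ i ∈ s, x i →
      (∃ i ∈ s, z i ≠ x i) → ∑ i ∈ s, (x i - y i) ^ 2 < ∑ i ∈ s, (z i - y i) ^ 2)
    {i : ι} (hi : i ∈ s) :
    x i = y i + (∑ j ∈ s, x j - ∑ j ∈ s, y j) / #s := by
  set t := (∑ j ∈ s, x j - ∑ j ∈ s, y j) / #s
  have hcard : (#s : ℝ) ≠ 0 := by exact_mod_cast hs.card_pos.ne'
  have hx : ∑ j ∈ s, x j = ∑ j ∈ s, y j + #s * t := by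
    simp only [t]; field_simp; ring
  -- `y + t` is feasible and, by the identity above, at least as close to `y` as `x` is.
  by_contra hne
  have hlt := hmin (fun j => y j + t) (by rw [sum_add_distrib, sum_const, nsmul_eq_mul, hx])
    ⟨i, hi, Ne.symm hne⟩
  rw [s.sum_sq_sub_eq_of_sum_eq_add_card_mul x y t hx] at hlt
  simp only [add_sub_cancel_left, sum_const, nsmul_eq_mul] at hlt
  linarith [sum_nonneg fun j (_ : j ∈ s) => sq_nonneg (x j - (y j + t))]

theorem ProbabilityTheory.iIndepFun.variance_sum_const_mul {Ω ι : Type*} [MeasurableSpace Ω]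
    {μ : Measure Ω} [Fintype ι] {X : ι → Ω → ℝ} (hX : ∀ i, MemLp (X i) 2 μ)
    (hindep : iIndepFun X μ) (c : ι → ℝ) :
    variance (fun ω => ∑ i, c i * X i ω) μ = ∑ i, c i ^ 2 * variance (X i) μ := by
  have hsum : (fun ω => ∑ i, c i * X i ω) = ∑ i, fun ω => c i * X i ω := by
    funext ω; simp
  have hpair : Set.Pairwise (univ : Finset ι) fun i j =>
      (fun ω => c i * X i ω) ⟂ᵢ[μ] fun ω => c j * X j ω := fun i _ j _ hij =>
    (hindep.indepFun hij).comp (measurable_const_mul _) (measurable_const_mul _)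
  rw [hsum, IndepFun.variance_sum (fun i _ => (hX i).const_mul (c i)) hpair]
  simp only [variance_const_mul]

namespace Hierarchy

variable (H : Hierarchy)

def weightIncrement (w : H.Node → ℝ) (h : H.Node) : ℝ :=
  if h = H.root then w h else w h - w (H.parent h)

variable {H}

@[simp]
theorem mem_children {c h : H.Node} : c ∈ H.children h ↔ c ≠ H.root ∧ H.parent c = h := by
  simp [children]

@[simp]
theorem mem_levelSet {h : H.Node} {ℓ : ℕ} : h ∈ H.levelSet ℓ ↔ H.level h = ℓ := by
  simp [levelSet]

theorem ne_root_of_one_lt_level {h : H.Node} (hh : 1 < H.level h) : h ≠ H.root := by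
  rintro rfl
  rw [H.level_root] at hh
  exact lt_irrefl 1 hh

theorem children_nonempty {h : H.Node} (hlt : H.level h < H.d) : (H.children h).Nonempty := by
  obtain ⟨c, hc, hpar⟩ := H.child_exists h hlt
  exact ⟨c, mem_children.2 ⟨hc, hpar⟩⟩

variable (H) in
theorem levelSet_one : H.levelSet 1 = {H.root} := by
  ext h
  simp only [mem_levelSet, mem_singleton]
  exact ⟨H.root_unique h, fun e => e ▸ H.level_root⟩

theorem weightIncrement_root (w : H.Node → ℝ) : H.weightIncrement w H.root = w H.root :=
  if_pos rfl

theorem weightIncrement_of_ne_root (w : H.Node → ℝ) {h : H.Node} (hh : h ≠ H.root) :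
    H.weightIncrement w h = w h - w (H.parent h) :=
  if_neg hh

theorem sum_levelSet_succ {M : Type*} [AddCommMonoid M] (f : H.Node → M) {n : ℕ}
    (hn : 1 ≤ n) :
    ∑ c ∈ H.levelSet (n + 1), f c = ∑ g ∈ H.levelSet n, ∑ c ∈ H.children g, f c := by
  have hne : ∀ c ∈ H.levelSet (n + 1), c ≠ H.root := fun c hc =>
    ne_root_of_one_lt_level (by rw [mem_levelSet.1 hc]; omega)
  have hmaps : ∀ c ∈ H.levelSet (n + 1), H.parent c ∈ H.levelSet n := fun c hc => by
    have := H.parent_level c (hne c hc)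
    rw [mem_levelSet.1 hc] at this
    exact mem_levelSet.2 (by omega)
  rw [← sum_fiberwise_of_maps_to hmaps]
  refine sum_congr rfl fun g hg => sum_congr ?_ fun _ _ => rfl
  ext c
  simp only [mem_filter, mem_children]
  constructor
  · rintro ⟨hc, hpar⟩
    exact ⟨hne c hc, hpar⟩
  · rintro ⟨hc, rfl⟩
    have := H.parent_level c hc
    rw [mem_levelSet.1 hg] at this
    exact ⟨mem_levelSet.2 this.symm, rfl⟩

theorem sum_univ_eq_sum_levelSet {M : Type*} [AddCommMonoid M] (f : H.Node → M) :
    ∑ h, f h = ∑ ℓ ∈ Icc 1 H.d, ∑ h ∈ H.levelSet ℓ, f h :=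
  (sum_fiberwise_of_maps_to (fun h _ => mem_Icc.2 ⟨H.level_pos h, H.level_le h⟩) f).symm

theorem toydown_error_of_mem_children {a L α : H.Node → ℝ} (hcons : H.Consistent a)
    (htd : H.IsToyDown a L α) {h : H.Node} (hlt : H.level h < H.d) {c : H.Node}
    (hc : c ∈ H.children h) :
    α c - a c = L c + ((α h - a h) - ∑ c' ∈ H.children h, L c') / #(H.children h) := by
  obtain ⟨hsum, hmin⟩ := htd.2 h hlt
  have hc' := eq_add_of_forall_sum_sq_sub_lt (children_nonempty hlt)
    (fun z hz hne => hmin z (hz.trans hsum) hne) hc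
  rw [hc', hsum, sum_add_distrib, ← hcons h hlt]
  ring

theorem sum_children_mul_toydown_error {a L α w : H.Node → ℝ} (hcons : H.Consistent a)
    (htd : H.IsToyDown a L α) {h : H.Node} (hlt : H.level h < H.d)
    (hwh : w h = (∑ c ∈ H.children h, w c) / #(H.children h)) :
    ∑ c ∈ H.children h, w c * (α c - a c) =
      w h * (α h - a h) + ∑ c ∈ H.children h, (w c - w h) * L c := by
  have hcard : (#(H.children h) : ℝ) ≠ 0 := by
    exact_mod_cast (children_nonempty hlt).card_pos.ne'
  have hsumw : ∑ c ∈ H.children h, w c = #(H.children h) * w h := by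
    rw [hwh]; field_simp
  rw [sum_congr rfl fun c hc => by rw [toydown_error_of_mem_children hcons htd hlt hc]]
  simp only [mul_add, sub_mul, sum_add_distrib, sum_sub_distrib, ← sum_mul, hsumw, ← mul_sum]
  field_simp
  ring

theorem sum_levelSet_succ_mul_toydown_error {a L α w : H.Node → ℝ} {D : Finset H.Node}
    (hcons : H.Consistent a) (htd : H.IsToyDown a L α) (hw : H.IsWeights D w) {n : ℕ}
    (hn : 1 ≤ n) (hnd : n < H.d) :
    ∑ h ∈ H.levelSet (n + 1), w h * (α h - a h) =
      ∑ h ∈ H.levelSet n, w h * (α h - a h) +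
        ∑ h ∈ H.levelSet (n + 1), H.weightIncrement w h * L h := by
  rw [sum_levelSet_succ _ hn, sum_levelSet_succ _ hn, ← sum_add_distrib]
  refine sum_congr rfl fun g hg => ?_
  have hlt : H.level g < H.d := by rw [mem_levelSet.1 hg]; exact hnd
  rw [sum_children_mul_toydown_error hcons htd hlt (hw.2 g hlt)]
  congr 1
  refine sum_congr rfl fun c hc => ?_
  obtain ⟨hne, hpar⟩ := mem_children.1 hc
  rw [weightIncrement_of_ne_root w hne, hpar]

theorem sum_levelSet_mul_toydown_error {a L α w : H.Node → ℝ} {D : Finset H.Node}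
    (hcons : H.Consistent a) (htd : H.IsToyDown a L α) (hw : H.IsWeights D w) {ℓ : ℕ}
    (h1 : 1 ≤ ℓ) (hℓ : ℓ ≤ H.d) :
    ∑ h ∈ H.levelSet ℓ, w h * (α h - a h) =
      ∑ k ∈ Icc 1 ℓ, ∑ h ∈ H.levelSet k, H.weightIncrement w h * L h := by
  induction ℓ, h1 using Nat.le_induction with
  | base =>
    simp only [Icc_self, sum_singleton, levelSet_one, weightIncrement_root, htd.1,
      add_sub_cancel_left]
  | succ n hn ih =>
    rw [sum_levelSet_succ_mul_toydown_error hcons htd hw hn hℓ, ih (by omega),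
      sum_Icc_succ_top (by omega)]

theorem sum_toydown_error_eq_sum_weightIncrement_mul {a L α w : H.Node → ℝ}
    {D : Finset H.Node} (hcons : H.Consistent a) (htd : H.IsToyDown a L α) (hD : D ⊆ H.leaves)
    (hw : H.IsWeights D w) :
    ∑ h ∈ D, (α h - a h) = ∑ h, H.weightIncrement w h * L h := by
  have hleaves : ∑ h ∈ H.leaves, w h * (α h - a h) = ∑ h ∈ D, (α h - a h) := by
    rw [← sum_subset hD fun h hh hnD => by rw [hw.1 h (mem_levelSet.1 hh), if_neg hnD, zero_mul]]
    exact sum_congr rfl fun h hh => by rw [hw.1 h (mem_levelSet.1 (hD hh)), if_pos hh, one_mul]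
  rw [← hleaves, leaves, sum_levelSet_mul_toydown_error hcons htd hw H.d_pos le_rfl,
    sum_univ_eq_sum_levelSet]

theorem sum_weightIncrement_sq_mul (w : H.Node → ℝ) (g : ℕ → ℝ) :
    ∑ h, H.weightIncrement w h ^ 2 * g (H.level h) =
      w H.root ^ 2 * g 1 +
        ∑ ℓ ∈ Icc 2 H.d, g ℓ * ∑ h ∈ H.levelSet ℓ, (w h - w (H.parent h)) ^ 2 := by
  rw [sum_univ_eq_sum_levelSet, ← add_sum_Ioc_eq_sum_Icc H.d_pos, ← Icc_add_one_left_eq_Ioc,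
    levelSet_one, sum_singleton, weightIncrement_root, H.level_root]
  congr 1
  refine sum_congr rfl fun ℓ hℓ => ?_
  rw [mul_sum]
  refine sum_congr rfl fun h hh => ?_
  have hlevel := mem_levelSet.1 hh
  have hne : h ≠ H.root := ne_root_of_one_lt_level (by rw [hlevel]; exact (mem_Icc.1 hℓ).1)
  rw [weightIncrement_of_ne_root w hne, hlevel, mul_comm]

end Hierarchy

theorem toydown_district_error_variance_general (H : Hierarchy)
    {Ω : Type} [MeasurableSpace Ω] (μ : MeasureTheory.Measure Ω)
    [MeasureTheory.IsProbabilityMeasure μ]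
    (ε : ℕ → ℝ)
    (a : H.Node → ℝ) (hcons : H.Consistent a)
    (L : H.Node → Ω → ℝ)
    (hL2 : ∀ h, MeasureTheory.MemLp (L h) 2 μ)
    (hindep : iIndepFun L μ)
    (hmean : ∀ h, ∫ ω, L h ω ∂μ = 0)
    (hvar : ∀ h, variance (L h) μ = 8 / (ε (H.level h)) ^ 2)
    (α : H.Node → Ω → ℝ)
    (hα : ∀ ω, H.IsToyDown a (fun h => L h ω) (fun h => α h ω))
    (D : Finset H.Node) (hD : D ⊆ H.leaves)
    (w : H.Node → ℝ) (hw : H.IsWeights D w) :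
    (∫ ω, (∑ h ∈ D, (α h ω - a h)) ∂μ) = 0 ∧
      variance (fun ω => ∑ h ∈ D, (α h ω - a h)) μ =
        8 * (w H.root) ^ 2 / (ε 1) ^ 2 +
          ∑ ℓ ∈ Finset.Icc 2 H.d, (8 / (ε ℓ) ^ 2) *
            ∑ h ∈ H.levelSet ℓ, (w h - w (H.parent h)) ^ 2 := by
  have herror : (fun ω => ∑ h ∈ D, (α h ω - a h)) =
      fun ω => ∑ h, H.weightIncrement w h * L h ω :=
    funext fun ω => H.sum_toydown_error_eq_sum_weightIncrement_mul hcons (hα ω) hD hw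
  refine ⟨?_, ?_⟩
  · rw [herror, integral_finsetSum _ fun h _ => ((hL2 h).integrable one_le_two).const_mul _]
    simp [integral_const_mul, hmean]
  · rw [herror, hindep.variance_sum_const_mul hL2]
    simp only [hvar]
    rw [H.sum_weightIncrement_sq_mul w fun ℓ => 8 / ε ℓ ^ 2, mul_div_assoc', mul_comm]

/-- Expectation and variance of the ToyDown district error when the noise variables are
independent, mean zero, with `Var(L_h) = 8/ε_{ℓ(h)}²`. -/
theorem toydown_district_error_variance (H : Hierarchy)
    {Ω : Type} [MeasurableSpace Ω] (μ : MeasureTheory.Measure Ω)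
    [MeasureTheory.IsProbabilityMeasure μ]
    (ε : ℕ → ℝ) (hε : ∀ ℓ, 1 ≤ ℓ → ℓ ≤ H.d → 0 < ε ℓ)
    (a : H.Node → ℝ) (hcons : H.Consistent a)
    (L : H.Node → Ω → ℝ)
    (hmeas : ∀ h, Measurable (L h))
    (hL2 : ∀ h, MeasureTheory.MemLp (L h) 2 μ)
    (hindep : iIndepFun L μ)
    (hmean : ∀ h, ∫ ω, L h ω ∂μ = 0)
    (hvar : ∀ h, variance (L h) μ = 8 / (ε (H.level h)) ^ 2)
    (α : H.Node → Ω → ℝ)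
    (hα : ∀ ω, H.IsToyDown a (fun h => L h ω) (fun h => α h ω))
    (D : Finset H.Node) (hD : D ⊆ H.leaves)
    (w : H.Node → ℝ) (hw : H.IsWeights D w) :
    (∫ ω, (∑ h ∈ D, (α h ω - a h)) ∂μ) = 0 ∧
      variance (fun ω => ∑ h ∈ D, (α h ω - a h)) μ =
        8 * (w H.root) ^ 2 / (ε 1) ^ 2 +
          ∑ ℓ ∈ Finset.Icc 2 H.d, (8 / (ε ℓ) ^ 2) *
            ∑ h ∈ H.levelSet ℓ, (w h - w (H.parent h)) ^ 2 :=
  toydown_district_error_variance_general H μ ε a hcons L hL2 hindep hmean hvar α hα D hD w hw
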